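/- Let (s,t) ∈ ℂ² with |s|² = |t|² + 1, and let h(z) = e^{|z|²/4}. Then ∫_ℂ |K^{(s,t)}(z,w)| h(w)² dλ(w) = 2√|s| · h(z)² for all z ∈ ℂ, and ∫_ℂ |K^{(s,t)}(z,w)| h(z)² dλ(z) = 2√|s| · h(w)² for all w ∈ ℂ. Consequently, by Schur's test, the integral operator with kernel |K^{(s,t)}(z,w)| is bounded on L²(ℂ, dλ) with norm at most 2√|s|. -/

import Mathlib

/-!
For fixed `z`, the integrand `|K(z,w)| e^{|w|²/2} e^{-|w|²}` is, up to the factor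
`e^{Re(tz²/2s)} / √|s|`, the exponential of a real quadratic polynomial in `(Re w, Im w)`. Its
quadratic part `-|w|²/2 + Re(m w̄²)` with `m = -t̄/(2s)` is negative definite because
`|s|² = |t|² + 1` gives `1 - 4|m|² = 1/|s|²`, and the Gaussian integral evaluates to
`2√|s| e^{|z|²/2}`. The identity in `z` follows from the one in `w` by the symmetry
`|K^{(s,t)}(z,w)| = |K^{(s̄,-t)}(w,z)|`. The operator bound is Schur's test, which comes from the
weighted Cauchy–Schwarz inequality `(∫ k f)² ≤ (∫ k h) (∫ k f² / h)` followed by Tonelli.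
-/

open MeasureTheory Complex

noncomputable def gaussMeasure : Measure ℂ :=
  volume.withDensity (fun z => ENNReal.ofReal (Real.exp (-(‖z‖)^2) / Real.pi))

noncomputable def csqrt (z : ℂ) : ℂ := z ^ ((1:ℂ)/2)

noncomputable def Kst (s t z w : ℂ) : ℂ :=
  (csqrt s)⁻¹ *
    Complex.exp ((t*z^2 - starRingEnd ℂ (t*w^2) + 2*z*(starRingEnd ℂ w)) / (2*s))

open Real ComplexConjugate
open scoped ENNReal

theorem integral_exp_quadratic {a : ℝ} (ha : 0 < a) (c d : ℝ) :
    ∫ x : ℝ, rexp (-a * x ^ 2 + c * x + d) = √(π / a) * rexp (d + c ^ 2 / (4 * a)) := by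
  have h := integral_cexp_quadratic (b := -a) (by simpa using ha) c d
  have hsqrt : ((π : ℂ) / -(-a : ℂ)) ^ (1 / 2 : ℂ) = (√(π / a) : ℝ) := by
    rw [Real.sqrt_eq_rpow, ofReal_cpow (by positivity)]
    norm_num
  rw [← ofReal_inj, ← integral_complex_ofReal]
  push_cast
  rw [h, hsqrt]
  congr 2
  field_simp
  ring

theorem integrable_exp_quadratic {a : ℝ} (ha : 0 < a) (c d : ℝ) :
    Integrable fun x : ℝ ↦ rexp (-a * x ^ 2 + c * x + d) := by
  refine (integrable_cexp_quadratic (b := a) (by simpa using ha) c d).norm.congr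
    (.of_forall fun x ↦ ?_)
  simp [norm_exp, ← ofReal_pow]

theorem integral_exp_quadratic_form_snd {b : ℝ} (hb : 0 < b) (a c d e x : ℝ) :
    ∫ y : ℝ, rexp (-a * x ^ 2 - b * y ^ 2 + c * x * y + d * x + e * y)
      = √(π / b) * rexp (-(a - c ^ 2 / (4 * b)) * x ^ 2 + (d + c * e / (2 * b)) * x
          + e ^ 2 / (4 * b)) := by
  have hquad : ∀ y : ℝ, -a * x ^ 2 - b * y ^ 2 + c * x * y + d * x + e * y
      = -b * y ^ 2 + (c * x + e) * y + (-a * x ^ 2 + d * x) := fun y ↦ by ring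
  simp_rw [hquad, integral_exp_quadratic hb]
  congr 2
  field_simp
  ring

theorem integrable_exp_quadratic_form {a b c : ℝ} (hb : 0 < b) (hdet : c ^ 2 < 4 * a * b)
    (d e : ℝ) :
    Integrable fun p : ℝ × ℝ ↦
      rexp (-a * p.1 ^ 2 - b * p.2 ^ 2 + c * p.1 * p.2 + d * p.1 + e * p.2) := by
  have ha' : 0 < a - c ^ 2 / (4 * b) := by
    rw [sub_pos, div_lt_iff₀ (by positivity)]; linarith
  rw [Measure.volume_eq_prod, integrable_prod_iff (by fun_prop)]
  refine ⟨.of_forall fun x ↦ ?_, ?_⟩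
  · simpa only [show ∀ y : ℝ, -a * x ^ 2 - b * y ^ 2 + c * x * y + d * x + e * y
      = -b * y ^ 2 + (c * x + e) * y + (-a * x ^ 2 + d * x) from fun y ↦ by ring]
      using integrable_exp_quadratic hb (c * x + e) (-a * x ^ 2 + d * x)
  · simp only [Real.norm_eq_abs, abs_exp, integral_exp_quadratic_form_snd hb]
    exact (integrable_exp_quadratic ha' _ _).const_mul _

theorem integral_exp_quadratic_form {a b c : ℝ} (hb : 0 < b) (hdet : c ^ 2 < 4 * a * b)
    (d e : ℝ) :
    ∫ p : ℝ × ℝ, rexp (-a * p.1 ^ 2 - b * p.2 ^ 2 + c * p.1 * p.2 + d * p.1 + e * p.2)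
      = 2 * π / √(4 * a * b - c ^ 2)
          * rexp ((a * e ^ 2 + b * d ^ 2 + c * d * e) / (4 * a * b - c ^ 2)) := by
  have hdet' : 0 < 4 * a * b - c ^ 2 := by linarith
  have ha' : a - c ^ 2 / (4 * b) = (4 * a * b - c ^ 2) / (4 * b) := by field_simp
  have hint := integrable_exp_quadratic_form hb hdet d e
  rw [Measure.volume_eq_prod] at hint ⊢
  rw [integral_prod _ hint]
  simp_rw [integral_exp_quadratic_form_snd hb, integral_const_mul, ha',
    integral_exp_quadratic (by positivity : 0 < (4 * a * b - c ^ 2) / (4 * b)), ← mul_assoc,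
    ← Real.sqrt_mul (by positivity : 0 ≤ π / b)]
  have hsqrt : π / b * (π / ((4 * a * b - c ^ 2) / (4 * b)))
      = (2 * π) ^ 2 / (4 * a * b - c ^ 2) := by
    field_simp; ring
  rw [hsqrt, Real.sqrt_div (by positivity), Real.sqrt_sq (by positivity)]
  congr 2
  -- the determinant as `field_simp` normalizes it
  have : 4 * b * a - c ^ 2 ≠ 0 := by linarith
  field_simp
  ring

theorem integral_exp_re_conj_quadratic {m : ℂ} (hm : 4 * ‖m‖ ^ 2 < 1) (g : ℂ) :
    ∫ w : ℂ, rexp ((m * conj w ^ 2 + g * conj w).re - ‖w‖ ^ 2 / 2)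
      = 2 * π / √(1 - 4 * ‖m‖ ^ 2)
          * rexp ((‖g‖ ^ 2 / 2 + (m * conj g ^ 2).re) / (1 - 4 * ‖m‖ ^ 2)) := by
  have hnorm : ‖m‖ ^ 2 = m.re ^ 2 + m.im ^ 2 := by rw [Complex.sq_norm, normSq_apply]; ring
  have hdet : (2 * m.im) ^ 2 < 4 * (1 / 2 - m.re) * (1 / 2 + m.re) := by linarith
  rw [← (volume_preserving_equiv_real_prod.symm).integral_comp
    measurableEquivRealProd.symm.measurableEmbedding]
  have hquad : ∀ p : ℝ × ℝ,
      (m * conj (measurableEquivRealProd.symm p) ^ 2 + g * conj (measurableEquivRealProd.symm p)).re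
        - ‖measurableEquivRealProd.symm p‖ ^ 2 / 2
      = -(1 / 2 - m.re) * p.1 ^ 2 - (1 / 2 + m.re) * p.2 ^ 2 + 2 * m.im * p.1 * p.2
        + g.re * p.1 + g.im * p.2 := fun p ↦ by
    rw [Complex.sq_norm]
    simp [measurableEquivRealProd_symm_apply, normSq_apply, sq, mul_re, mul_im]
    ring
  have hdisc : 4 * (1 / 2 - m.re) * (1 / 2 + m.re) - (2 * m.im) ^ 2 = 1 - 4 * ‖m‖ ^ 2 := by
    rw [hnorm]; ring
  simp_rw [hquad, integral_exp_quadratic_form (by nlinarith) hdet, hdisc]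
  congr 3
  rw [Complex.sq_norm, normSq_apply]
  simp [sq, mul_re, mul_im]
  ring

section Schur

variable {α β : Type*} [MeasurableSpace α] [MeasurableSpace β] {μ : Measure α} {ν : Measure β}

theorem ENNReal.sq_lintegral_mul_le {f g : α → ℝ≥0∞} (hf : AEMeasurable f μ)
    (hg : AEMeasurable g μ) :
    (∫⁻ a, f a * g a ∂μ) ^ 2 ≤ (∫⁻ a, f a ^ 2 ∂μ) * ∫⁻ a, g a ^ 2 ∂μ := by
  have h := ENNReal.lintegral_mul_le_Lp_mul_Lq μ Real.HolderConjugate.two_two hf hg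
  simp only [Pi.mul_apply, ENNReal.rpow_two, one_div] at h
  rw [← ENNReal.mul_rpow_of_nonneg _ _ (by norm_num), ENNReal.le_rpow_inv_iff (by norm_num),
    ENNReal.rpow_two] at h
  exact h

theorem ENNReal.sq_lintegral_mul_le_of_weight {k f q : α → ℝ≥0∞} (hk : AEMeasurable k μ)
    (hf : AEMeasurable f μ) (hq : AEMeasurable q μ) (hq₀ : ∀ a, q a ≠ 0) (hq_top : ∀ a, q a ≠ ∞) :
    (∫⁻ a, k a * f a ∂μ) ^ 2 ≤ (∫⁻ a, k a * q a ∂μ) * ∫⁻ a, k a * f a ^ 2 / q a ∂μ := by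
  have hsq : ∀ x : ℝ≥0∞, (x ^ (2⁻¹ : ℝ)) ^ 2 = x := fun x ↦ by
    simpa using ENNReal.rpow_inv_natCast_pow (n := 2) two_ne_zero x
  have hprod : ∀ a, (k a * q a) ^ (2⁻¹ : ℝ) * (k a * f a ^ 2 / q a) ^ (2⁻¹ : ℝ) = k a * f a := by
    intro a
    rw [← ENNReal.mul_rpow_of_nonneg _ _ (by norm_num)]
    have : k a * q a * (k a * f a ^ 2 / q a) = (k a * f a) ^ 2 := by
      rw [div_eq_mul_inv, show k a * q a * (k a * f a ^ 2 * (q a)⁻¹)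
          = (k a * f a) ^ 2 * (q a * (q a)⁻¹) by ring,
        ENNReal.mul_inv_cancel (hq₀ a) (hq_top a), mul_one]
    rw [this]
    simpa using ENNReal.pow_rpow_inv_natCast (n := 2) two_ne_zero (k a * f a)
  have h := ENNReal.sq_lintegral_mul_le (μ := μ) (f := fun a ↦ (k a * q a) ^ (2⁻¹ : ℝ))
    (g := fun a ↦ (k a * f a ^ 2 / q a) ^ (2⁻¹ : ℝ)) (by fun_prop) (by fun_prop)
  simpa only [hprod, hsq] using h

theorem lintegral_sq_lintegral_mul_le_of_schur [SFinite μ] [SFinite ν] {K : α → β → ℝ≥0∞}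
    (hK : Measurable (Function.uncurry K)) {p : α → ℝ≥0∞} {q : β → ℝ≥0∞} (hp : Measurable p)
    (hq : Measurable q) (hq₀ : ∀ w, q w ≠ 0) (hq_top : ∀ w, q w ≠ ∞)
    {C₁ C₂ : ℝ≥0∞} (h₁ : ∀ z, ∫⁻ w, K z w * q w ∂ν ≤ C₁ * p z)
    (h₂ : ∀ w, ∫⁻ z, K z w * p z ∂μ ≤ C₂ * q w) {f : β → ℝ≥0∞} (hf : AEMeasurable f ν) :
    ∫⁻ z, (∫⁻ w, K z w * f w ∂ν) ^ 2 ∂μ ≤ C₁ * C₂ * ∫⁻ w, f w ^ 2 ∂ν := by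
  wlog hf_meas : Measurable f generalizing f
  · have hmk : ∀ z, ∫⁻ w, K z w * f w ∂ν = ∫⁻ w, K z w * hf.mk f w ∂ν := fun z ↦
      lintegral_congr_ae (hf.ae_eq_mk.mono fun w hw ↦ congrArg (K z w * ·) hw)
    have hmk_sq : ∫⁻ w, f w ^ 2 ∂ν = ∫⁻ w, hf.mk f w ^ 2 ∂ν :=
      lintegral_congr_ae (hf.ae_eq_mk.mono fun w hw ↦ congrArg (· ^ 2) hw)
    simpa only [hmk, hmk_sq] using this hf.measurable_mk.aemeasurable hf.measurable_mk
  have hK_left : ∀ z, Measurable (K z) := fun z ↦ hK.comp measurable_prodMk_left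
  have hg : Measurable fun x : α × β ↦ K x.1 x.2 * f x.2 ^ 2 / q x.2 :=
    (hK.mul ((hf_meas.pow_const 2).comp measurable_snd)).div (hq.comp measurable_snd)
  calc ∫⁻ z, (∫⁻ w, K z w * f w ∂ν) ^ 2 ∂μ
      ≤ ∫⁻ z, C₁ * p z * ∫⁻ w, K z w * f w ^ 2 / q w ∂ν ∂μ := by
        refine lintegral_mono fun z ↦ ?_
        grw [ENNReal.sq_lintegral_mul_le_of_weight (hK_left z).aemeasurable hf hq.aemeasurable
          hq₀ hq_top, h₁ z]
    _ = C₁ * ∫⁻ z, ∫⁻ w, p z * (K z w * f w ^ 2 / q w) ∂ν ∂μ := by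
        have hI : Measurable fun z ↦ p z * ∫⁻ w, K z w * f w ^ 2 / q w ∂ν :=
          hp.mul hg.lintegral_prod_right'
        simp_rw [mul_assoc]
        rw [lintegral_const_mul C₁ hI]
        refine congrArg _ (lintegral_congr fun z ↦ ?_)
        exact (lintegral_const_mul (p z) (hg.comp measurable_prodMk_left)).symm
    _ = C₁ * ∫⁻ w, ∫⁻ z, p z * (K z w * f w ^ 2 / q w) ∂μ ∂ν := by
        rw [lintegral_lintegral_swap ((hp.comp measurable_fst).mul hg).aemeasurable]
    _ = C₁ * ∫⁻ w, f w ^ 2 / q w * ∫⁻ z, K z w * p z ∂μ ∂ν := by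
        congr 1
        refine lintegral_congr fun w ↦ ?_
        have hKp : Measurable fun z ↦ K z w * p z := (hK.comp measurable_prodMk_right).mul hp
        rw [← lintegral_const_mul _ hKp]
        refine lintegral_congr fun z ↦ ?_
        simp only [div_eq_mul_inv]
        ring
    _ ≤ C₁ * ∫⁻ w, f w ^ 2 / q w * (C₂ * q w) ∂ν := by
        gcongr with w
        exact h₂ w
    _ = C₁ * C₂ * ∫⁻ w, f w ^ 2 ∂ν := by
        rw [mul_assoc, ← lintegral_const_mul _ (hf_meas.pow_const 2)]
        congr 2 with w
        rw [mul_comm C₂, ← mul_assoc, ENNReal.div_mul_cancel (hq₀ w) (hq_top w), mul_comm]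

theorem integral_le_toReal_lintegral_ofReal {f : α → ℝ} (hf : ∀ a, 0 ≤ f a) :
    ∫ a, f a ∂μ ≤ (∫⁻ a, .ofReal (f a) ∂μ).toReal := by
  simpa only [Real.norm_of_nonneg (hf _)] using
    (le_abs_self _).trans (norm_integral_le_lintegral_norm f)

theorem ofReal_integral_le_lintegral_ofReal {f : α → ℝ} (hf : ∀ a, 0 ≤ f a) :
    ENNReal.ofReal (∫ a, f a ∂μ) ≤ ∫⁻ a, .ofReal (f a) ∂μ :=
  ENNReal.ofReal_le_of_le_toReal (integral_le_toReal_lintegral_ofReal hf)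

theorem lintegral_ofReal_eq_of_integral_eq {f : α → ℝ} {c : ℝ} (hf : ∀ a, 0 ≤ f a)
    (h : ∫ a, f a ∂μ = c) (hc : c ≠ 0) :
    ∫⁻ a, .ofReal (f a) ∂μ = .ofReal c := by
  rw [← h, ofReal_integral_eq_lintegral_ofReal (.of_integral_ne_zero (h ▸ hc)) (.of_forall hf)]

theorem sqrt_integral_sq_integral_mul_le_of_schur {E : Type*} [NormedAddCommGroup E] [SFinite μ]
    {Q : α → α → ℝ} (hQ : Measurable (Function.uncurry Q)) (hQ₀ : ∀ z w, 0 ≤ Q z w) {h : α → ℝ}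
    (hh : Measurable h) (hh₀ : ∀ z, 0 < h z) {C : ℝ} (hC : 0 < C)
    (h₁ : ∀ z, ∫ w, Q z w * h w ∂μ = C * h z) (h₂ : ∀ w, ∫ z, Q z w * h z ∂μ = C * h w)
    {f : α → E} (hf : Integrable (fun z ↦ ‖f z‖ ^ 2) μ) :
    √(∫ z, (∫ w, Q z w * ‖f w‖ ∂μ) ^ 2 ∂μ) ≤ C * √(∫ z, ‖f z‖ ^ 2 ∂μ) := by
  have hf_meas : AEMeasurable (fun w ↦ ‖f w‖) μ := by
    simpa only [Real.sqrt_sq (norm_nonneg _)] using hf.aemeasurable.sqrt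
  have hweight : ∀ {g : α → ℝ} {x : α}, (∀ y, 0 ≤ g y) → ∫ y, g y * h y ∂μ = C * h x →
      ∫⁻ y, .ofReal (g y) * .ofReal (h y) ∂μ ≤ .ofReal C * .ofReal (h x) := fun hg hgh ↦ by
    simp_rw [← ENNReal.ofReal_mul (hg _), ← ENNReal.ofReal_mul hC.le]
    exact (lintegral_ofReal_eq_of_integral_eq (fun y ↦ mul_nonneg (hg y) (hh₀ y).le) hgh
      (mul_pos hC (hh₀ _)).ne').le
  have hschur := lintegral_sq_lintegral_mul_le_of_schur (μ := μ) (ν := μ)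
    (K := fun z w ↦ .ofReal (Q z w)) (p := fun z ↦ .ofReal (h z)) (q := fun z ↦ .ofReal (h z))
    (C₁ := .ofReal C) (C₂ := .ofReal C) (f := fun w ↦ .ofReal ‖f w‖)
    (ENNReal.measurable_ofReal.comp hQ) (ENNReal.measurable_ofReal.comp hh)
    (ENNReal.measurable_ofReal.comp hh) (fun w ↦ by simpa using hh₀ w)
    (fun _ ↦ ENNReal.ofReal_ne_top) (fun z ↦ hweight (hQ₀ z) (h₁ z))
    (fun w ↦ hweight (hQ₀ · w) (h₂ w)) (ENNReal.measurable_ofReal.comp_aemeasurable hf_meas)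
  have hnorm_sq : ∫⁻ w, ENNReal.ofReal ‖f w‖ ^ 2 ∂μ = .ofReal (∫ w, ‖f w‖ ^ 2 ∂μ) := by
    simp_rw [← ENNReal.ofReal_pow (norm_nonneg _)]
    exact (ofReal_integral_eq_lintegral_ofReal hf (.of_forall fun _ ↦ by positivity)).symm
  have hinner : ∀ z, ENNReal.ofReal ((∫ w, Q z w * ‖f w‖ ∂μ) ^ 2)
      ≤ (∫⁻ w, .ofReal (Q z w) * .ofReal ‖f w‖ ∂μ) ^ 2 := fun z ↦ by
    rw [ENNReal.ofReal_pow (integral_nonneg fun w ↦ mul_nonneg (hQ₀ z w) (norm_nonneg _))]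
    gcongr
    simp_rw [← ENNReal.ofReal_mul (hQ₀ z _)]
    exact ofReal_integral_le_lintegral_ofReal fun w ↦ mul_nonneg (hQ₀ z w) (norm_nonneg _)
  have hbound : ∫ z, (∫ w, Q z w * ‖f w‖ ∂μ) ^ 2 ∂μ ≤ C ^ 2 * ∫ w, ‖f w‖ ^ 2 ∂μ :=
    calc _ ≤ (∫⁻ z, .ofReal ((∫ w, Q z w * ‖f w‖ ∂μ) ^ 2) ∂μ).toReal :=
          integral_le_toReal_lintegral_ofReal fun _ ↦ sq_nonneg _
      _ ≤ (ENNReal.ofReal C * .ofReal C * .ofReal (∫ w, ‖f w‖ ^ 2 ∂μ)).toReal :=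
          ENNReal.toReal_mono (by finiteness) ((lintegral_mono hinner).trans (hnorm_sq ▸ hschur))
      _ = C ^ 2 * ∫ w, ‖f w‖ ^ 2 ∂μ := by
          have : 0 ≤ ∫ w, ‖f w‖ ^ 2 ∂μ := integral_nonneg fun w ↦ by positivity
          rw [← ENNReal.ofReal_mul hC.le, ← ENNReal.ofReal_mul (by positivity),
            ENNReal.toReal_ofReal (by positivity), sq]
  calc √(∫ z, (∫ w, Q z w * ‖f w‖ ∂μ) ^ 2 ∂μ) ≤ √(C ^ 2 * ∫ w, ‖f w‖ ^ 2 ∂μ) :=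
        Real.sqrt_le_sqrt hbound
    _ = C * √(∫ z, ‖f z‖ ^ 2 ∂μ) := by rw [Real.sqrt_mul (sq_nonneg C), Real.sqrt_sq hC.le]

end Schur

instance : SFinite gaussMeasure := by
  unfold gaussMeasure
  infer_instance

theorem integral_gaussMeasure (F : ℂ → ℝ) :
    ∫ w, F w ∂gaussMeasure = ∫ w, rexp (-‖w‖ ^ 2) / π * F w := by
  rw [gaussMeasure, integral_withDensity_eq_integral_toReal_smul (by fun_prop)
    (.of_forall fun _ ↦ ENNReal.ofReal_lt_top)]
  simp_rw [ENNReal.toReal_ofReal (by positivity : 0 ≤ rexp (-‖_‖ ^ 2) / π), smul_eq_mul]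

theorem norm_Kst {s : ℂ} (hs : s ≠ 0) (t z w : ℂ) :
    ‖Kst s t z w‖
      = (√‖s‖)⁻¹ * rexp (((t * z ^ 2 - conj (t * w ^ 2) + 2 * z * conj w) / (2 * s)).re) := by
  rw [Kst, norm_mul, norm_inv, norm_exp, csqrt, norm_cpow_of_ne_zero hs]
  simp [Real.sqrt_eq_rpow]

theorem norm_Kst_comm {s : ℂ} (hs : s ≠ 0) (t z w : ℂ) :
    ‖Kst s t z w‖ = ‖Kst (conj s) (-t) w z‖ := by
  rw [norm_Kst hs, norm_Kst ((map_ne_zero _).2 hs), norm_conj, ← conj_re]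
  congr 3
  simp only [map_div₀, map_mul, map_pow, map_sub, map_add, map_neg, conj_conj, map_ofNat]
  field_simp
  ring

theorem norm_Kst_eq_mul_exp {s : ℂ} (hs : s ≠ 0) (t z w : ℂ) :
    ‖Kst s t z w‖ = (√‖s‖)⁻¹ * rexp (t * z ^ 2 / (2 * s)).re
      * rexp ((-conj t / (2 * s) * conj w ^ 2 + z / s * conj w).re) := by
  have hsplit : (t * z ^ 2 - conj (t * w ^ 2) + 2 * z * conj w) / (2 * s)
      = t * z ^ 2 / (2 * s) + (-conj t / (2 * s) * conj w ^ 2 + z / s * conj w) := by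
    simp only [map_mul, map_pow]
    field_simp
    ring
  rw [norm_Kst hs, hsplit, add_re, Real.exp_add, mul_assoc]

theorem integral_norm_Kst_mul_exp_sq_snd {s t : ℂ} (h : ‖s‖ ^ 2 = ‖t‖ ^ 2 + 1) (z : ℂ) :
    ∫ w, ‖Kst s t z w‖ * rexp (‖w‖ ^ 2 / 4) ^ 2 ∂gaussMeasure
      = 2 * √‖s‖ * rexp (‖z‖ ^ 2 / 4) ^ 2 := by
  have hs : 0 < ‖s‖ := by nlinarith [norm_nonneg s, norm_nonneg t]
  have hs₀ : s ≠ 0 := norm_pos_iff.1 hs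
  set m := -conj t / (2 * s) with hm_def
  set g := z / s with hg_def
  have hm : 1 - 4 * ‖m‖ ^ 2 = (‖s‖ ^ 2)⁻¹ := by
    simp only [m, norm_div, norm_neg, norm_conj, norm_mul, Complex.norm_ofNat]
    field_simp
    linarith
  have hm₄ : 4 * ‖m‖ ^ 2 < 1 := by
    have : 0 < (‖s‖ ^ 2)⁻¹ := by positivity
    linarith
  have hre : (m * conj g ^ 2).re * ‖s‖ ^ 2 = -(t * z ^ 2 / (2 * s)).re := by
    have : m * conj g ^ 2 * ((‖s‖ ^ 2 : ℝ) : ℂ) = -conj (t * z ^ 2 / (2 * s)) := by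
      rw [ofReal_pow, ← mul_conj', hm_def, hg_def]
      simp only [map_div₀, map_mul, map_pow, map_ofNat]
      field_simp
    rw [← re_mul_ofReal, this, neg_re, conj_re]
  have hexp : (‖g‖ ^ 2 / 2 + (m * conj g ^ 2).re) / (1 - 4 * ‖m‖ ^ 2)
      = ‖z‖ ^ 2 / 2 - (t * z ^ 2 / (2 * s)).re := by
    rw [hm, div_inv_eq_mul, add_mul, hre, hg_def, norm_div]
    field_simp
    ring
  have hintegrand : ∀ w, rexp (-‖w‖ ^ 2) / π * (‖Kst s t z w‖ * rexp (‖w‖ ^ 2 / 4) ^ 2)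
      = (√‖s‖)⁻¹ / π * rexp (t * z ^ 2 / (2 * s)).re
        * rexp ((m * conj w ^ 2 + g * conj w).re - ‖w‖ ^ 2 / 2) := fun w ↦ by
    have hweight : rexp (-‖w‖ ^ 2) * rexp (‖w‖ ^ 2 / 4) ^ 2 = (rexp (‖w‖ ^ 2 / 2))⁻¹ := by
      rw [← Real.exp_nat_mul, ← Real.exp_add, ← Real.exp_neg]
      ring_nf
    rw [norm_Kst_eq_mul_exp hs₀, Real.exp_sub, div_eq_mul_inv _ (rexp _), ← hweight]
    ring
  have hz : rexp (‖z‖ ^ 2 / 4) ^ 2 = rexp (‖z‖ ^ 2 / 2) := by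
    rw [← Real.exp_nat_mul]; ring_nf
  rw [integral_gaussMeasure]
  simp_rw [hintegrand, integral_const_mul, integral_exp_re_conj_quadratic hm₄ g, hexp, hm]
  rw [Real.sqrt_inv, Real.sqrt_sq hs.le, Real.exp_sub, hz]
  field_simp
  exact (Real.sq_sqrt hs.le).symm

theorem integral_norm_Kst_mul_exp_sq_fst {s t : ℂ} (h : ‖s‖ ^ 2 = ‖t‖ ^ 2 + 1) (w : ℂ) :
    ∫ z, ‖Kst s t z w‖ * rexp (‖z‖ ^ 2 / 4) ^ 2 ∂gaussMeasure
      = 2 * √‖s‖ * rexp (‖w‖ ^ 2 / 4) ^ 2 := by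
  have hs : s ≠ 0 := norm_pos_iff.1 (by nlinarith [norm_nonneg s, norm_nonneg t])
  simp_rw [norm_Kst_comm hs t _ w]
  simpa only [norm_conj] using
    integral_norm_Kst_mul_exp_sq_snd (s := conj s) (t := -t) (by simpa using h) w

theorem continuous_Kst (s t : ℂ) : Continuous (Function.uncurry (Kst s t)) := by
  unfold Kst
  fun_prop

theorem schur_test_bound (s t : ℂ)
    (h : (‖s‖)^2 = (‖t‖)^2 + 1) :
    (∀ z : ℂ, ∫ w, ‖Kst s t z w‖ * (Real.exp ((‖w‖)^2/4))^2 ∂gaussMeasure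
        = 2 * Real.sqrt (‖s‖) * (Real.exp ((‖z‖)^2/4))^2) ∧
    (∀ w : ℂ, ∫ z, ‖Kst s t z w‖ * (Real.exp ((‖z‖)^2/4))^2 ∂gaussMeasure
        = 2 * Real.sqrt (‖s‖) * (Real.exp ((‖w‖)^2/4))^2) ∧
    (∀ f : ℂ → ℂ, Integrable (fun z => (‖f z‖)^2) gaussMeasure →
      Real.sqrt (∫ z, (∫ w, ‖Kst s t z w‖ * ‖f w‖ ∂gaussMeasure)^2
          ∂gaussMeasure)
        ≤ 2 * Real.sqrt (‖s‖) *
          Real.sqrt (∫ z, (‖f z‖)^2 ∂gaussMeasure)) := by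
  have hs : 0 < ‖s‖ := by nlinarith [norm_nonneg s, norm_nonneg t]
  refine ⟨integral_norm_Kst_mul_exp_sq_snd h, integral_norm_Kst_mul_exp_sq_fst h, fun f hf ↦ ?_⟩
  exact sqrt_integral_sq_integral_mul_le_of_schur (Q := fun z w ↦ ‖Kst s t z w‖)
    (h := fun w ↦ rexp (‖w‖ ^ 2 / 4) ^ 2) (continuous_Kst s t).norm.measurable
    (fun _ _ ↦ norm_nonneg _) (by fun_prop) (fun _ ↦ by positivity) (by positivity)
    (integral_norm_Kst_mul_exp_sq_snd h) (integral_norm_Kst_mul_exp_sq_fst h) hf
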